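/- The function h is twice differentiable and satisfies h''(t) = 2 g_t(L_t H_t, L_t H_t) − g_t(L_t' H_t, H_t) for all t, where L_t' denotes the derivative of the curve t ↦ L_t. -/

import Mathlib

open Finset
open scoped Matrix

private theorem det_diffAt {ι : Type*} [Fintype ι] [DecidableEq ι]
    (M : ℝ → Matrix ι ι ℝ) (t : ℝ)
    (hM : ∀ i j, DifferentiableAt ℝ (fun s => M s i j) t) :
    DifferentiableAt ℝ (fun s => (M s).det) t := by
  have : (fun s => (M s).det)
      = fun s => ∑ σ : Equiv.Perm ι, ((Equiv.Perm.sign σ : ℤ) : ℝ) * ∏ i, M s (σ i) i := by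
    funext s
    rw [Matrix.det_apply]
    simp [Units.smul_def, zsmul_eq_mul]
  rw [this]
  exact DifferentiableAt.fun_sum fun σ _ =>
    (differentiableAt_const _).mul (DifferentiableAt.fun_finsetProd fun i _ => hM _ _)

private theorem bilin_expand {V : Type*} [AddCommGroup V] [Module ℝ V] {ι : Type*} [Fintype ι]
    (b : Module.Basis ι ℝ V) (B : V →ₗ[ℝ] V →ₗ[ℝ] ℝ) (x y : V) :
    B x y = ∑ i, ∑ j, b.equivFun x i * (b.equivFun y j * B (b i) (b j)) := by
  conv_lhs => rw [← b.sum_equivFun x, ← b.sum_equivFun y]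
  simp [map_sum, LinearMap.sum_apply, map_smul, LinearMap.smul_apply, smul_eq_mul,
    Finset.mul_sum, mul_left_comm, -Module.Basis.sum_repr]
  exact Finset.sum_comm

private theorem hasDerivAt_coord {V : Type*} [NormedAddCommGroup V] [NormedSpace ℝ V]
    [FiniteDimensional ℝ V] {ι : Type*} [Fintype ι] (b : Module.Basis ι ℝ V)
    {f : ℝ → V} {d : V} {t : ℝ} (hf : HasDerivAt f d t) (i : ι) :
    HasDerivAt (fun s => b.equivFun (f s) i) (b.equivFun d i) t := by
  have := (LinearMap.toContinuousLinearMap (b.coord i)).hasFDerivAt.comp_hasDerivAt t hf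
  simp only [Function.comp_def, Module.Basis.coord_apply, Module.Basis.equivFun_apply, LinearMap.coe_toContinuousLinearMap'] at this ⊢
  exact this

private theorem hasDerivAt_bilin {V : Type*} [NormedAddCommGroup V] [NormedSpace ℝ V]
    [FiniteDimensional ℝ V] {ι : Type*} [Fintype ι] (b : Module.Basis ι ℝ V)
    (β : ℝ → V →ₗ[ℝ] V →ₗ[ℝ] ℝ) (t : ℝ) (β' : V →ₗ[ℝ] V →ₗ[ℝ] ℝ)
    (hβ : ∀ X Y : V, HasDerivAt (fun s => β s X Y) (β' X Y) t)
    {f₁ f₂ : ℝ → V} {d₁ d₂ : V} (h₁ : HasDerivAt f₁ d₁ t) (h₂ : HasDerivAt f₂ d₂ t) :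
    HasDerivAt (fun s => β s (f₁ s) (f₂ s))
      (β' (f₁ t) (f₂ t) + β t d₁ (f₂ t) + β t (f₁ t) d₂) t := by
  have key : (fun s => β s (f₁ s) (f₂ s))
      = fun s => ∑ i, ∑ j, b.equivFun (f₁ s) i * (b.equivFun (f₂ s) j * β s (b i) (b j)) := by
    funext s; exact bilin_expand b (β s) _ _
  rw [key]
  have hterm : ∀ i j, HasDerivAt
      (fun s => b.equivFun (f₁ s) i * (b.equivFun (f₂ s) j * β s (b i) (b j)))
      (b.equivFun d₁ i * (b.equivFun (f₂ t) j * β t (b i) (b j))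
        + b.equivFun (f₁ t) i * (b.equivFun d₂ j * β t (b i) (b j)
            + b.equivFun (f₂ t) j * β' (b i) (b j))) t := by
    intro i j
    exact (hasDerivAt_coord b h₁ i).mul ((hasDerivAt_coord b h₂ j).mul (hβ (b i) (b j)))
  have := HasDerivAt.fun_sum (u := Finset.univ)
    (fun i _ => HasDerivAt.fun_sum (u := Finset.univ) (fun j _ => hterm i j))
  refine this.congr_deriv (Eq.symm ?_)
  rw [bilin_expand b β' (f₁ t) (f₂ t), bilin_expand b (β t) d₁ (f₂ t),
    bilin_expand b (β t) (f₁ t) d₂]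
  rw [← Finset.sum_add_distrib, ← Finset.sum_add_distrib]
  refine Finset.sum_congr rfl fun i _ => ?_
  rw [← Finset.sum_add_distrib, ← Finset.sum_add_distrib]
  exact Finset.sum_congr rfl fun j _ => by ring

private theorem hasDerivAt_endo_apply {V : Type*} [NormedAddCommGroup V] [NormedSpace ℝ V]
    [FiniteDimensional ℝ V] {ι : Type*} [Fintype ι] (b : Module.Basis ι ℝ V)
    (A : ℝ → V →ₗ[ℝ] V) (t : ℝ) (A' : V →ₗ[ℝ] V)
    (hA : ∀ X : V, HasDerivAt (fun s => A s X) (A' X) t)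
    {f : ℝ → V} {d : V} (hf : HasDerivAt f d t) :
    HasDerivAt (fun s => A s (f s)) (A' (f t) + A t d) t := by
  have key : (fun s => A s (f s)) = fun s => ∑ i, b.equivFun (f s) i • A s (b i) := by
    funext s
    conv_lhs => rw [← b.sum_equivFun (f s)]
    simp [map_sum, map_smul, -Module.Basis.sum_repr]
  rw [key]
  have hterm : ∀ i, HasDerivAt (fun s => b.equivFun (f s) i • A s (b i))
      (b.equivFun (f t) i • A' (b i) + b.equivFun d i • A t (b i)) t :=
    fun i => (hasDerivAt_coord b hf i).smul (hA (b i))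
  have := HasDerivAt.fun_sum (u := Finset.univ) (fun i _ => hterm i)
  convert this using 1
  rw [Finset.sum_add_distrib]
  congr 1
  · conv_lhs => rw [← b.sum_equivFun (f t)]
    simp [map_sum, map_smul, -Module.Basis.sum_repr]
  · conv_lhs => rw [← b.sum_equivFun d]
    simp [map_sum, map_smul, -Module.Basis.sum_repr]

/-- For a smooth curve `g_t` of inner products on a finite-dimensional real vector space `V`,
with `L_t` the `g_t`-symmetric endomorphisms satisfying `(d/dt g_t)(X,Y) = 2 g_t(L_t X, Y)`
and derivative `L_t'`, `φ` a fixed linear functional, `H_t` the `g_t`-dual of `φ` and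
`h(t) = (1/2) g_t(H_t, H_t)`: the function `h` is twice differentiable with
`h''(t) = 2 g_t(L_t H_t, L_t H_t) − g_t(L_t' H_t, H_t)`. -/
theorem meanCurvature_second_derivative
    (V : Type*) [NormedAddCommGroup V] [NormedSpace ℝ V] [FiniteDimensional ℝ V]
    -- the smooth curve of inner products
    (g : ℝ → V →ₗ[ℝ] V →ₗ[ℝ] ℝ)
    (hg_symm : ∀ (t : ℝ) (X Y : V), g t X Y = g t Y X)
    (hg_pos : ∀ (t : ℝ) (X : V), X ≠ 0 → 0 < g t X X)
    (hg_smooth : ∀ X Y : V, ContDiff ℝ (⊤ : ℕ∞) fun t => g t X Y)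
    -- the `g_t`-symmetric endomorphisms `L_t` with `g_t' = 2 g_t(L_t ·, ·)`
    (L : ℝ → V →ₗ[ℝ] V)
    (hL_symm : ∀ (t : ℝ) (X Y : V), g t (L t X) Y = g t X (L t Y))
    (hL_deriv : ∀ (t : ℝ) (X Y : V),
      HasDerivAt (fun s => g s X Y) (2 * g t (L t X) Y) t)
    -- `L'` is the derivative of the curve `t ↦ L_t`
    (L' : ℝ → V →ₗ[ℝ] V)
    (hL' : ∀ (t : ℝ) (X : V), HasDerivAt (fun s => L s X) (L' t X) t)
    -- the fixed linear functional `φ` and its `g_t`-duals `H_t`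
    (φ : V →ₗ[ℝ] ℝ)
    (H : ℝ → V) (hH : ∀ (t : ℝ) (X : V), g t (H t) X = φ X)
    (h : ℝ → ℝ) (hh : ∀ t : ℝ, h t = (1/2) * g t (H t) (H t)) :
    ∃ h' : ℝ → ℝ, (∀ t : ℝ, HasDerivAt h (h' t) t) ∧
      (∀ t : ℝ, HasDerivAt h'
        (2 * g t (L t (H t)) (L t (H t)) - g t (L' t (H t)) (H t)) t) := by
  classical
  set b : Module.Basis (Fin (Module.finrank ℝ V)) ℝ V := Module.finBasis ℝ V with hb
  -- Gram matrix and the coefficient vector of φ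
  set G : ℝ → Matrix (Fin (Module.finrank ℝ V)) (Fin (Module.finrank ℝ V)) ℝ :=
    fun s => Matrix.of fun i j => g s (b i) (b j) with hG
  set p : Fin (Module.finrank ℝ V) → ℝ := fun i => φ (b i) with hp
  have hGdiff : ∀ (t : ℝ) i j, DifferentiableAt ℝ (fun s => G s i j) t :=
    fun t i j => (hL_deriv t (b i) (b j)).differentiableAt
  -- positive definiteness gives nondegeneracy
  have hnd : ∀ (s : ℝ) (v : V), (∀ X : V, g s v X = 0) → v = 0 := by
    intro s v hv
    by_contra h0
    exact absurd (hv v) (ne_of_gt (hg_pos s v h0))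
  -- G s is invertible
  have hGunit : ∀ s : ℝ, IsUnit (G s) := by
    intro s
    rw [← Matrix.mulVec_injective_iff_isUnit]
    have hker : ∀ c, G s *ᵥ c = 0 → c = 0 := by
      intro c hc
      set v : V := ∑ i, c i • b i with hv
      have hvv : g s v v = 0 := by
        have : g s v v = ∑ j, c j * ((G s *ᵥ c) j) := by
          simp only [hv, map_sum, LinearMap.sum_apply, map_smul, LinearMap.smul_apply,
            smul_eq_mul, Matrix.mulVec, dotProduct, hG, Matrix.of_apply]
          refine Finset.sum_congr rfl fun j _ => ?_
          congr 1
          refine Finset.sum_congr rfl fun i _ => ?_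
          rw [hg_symm s (b i) (b j)]
          ring
        rw [this, hc]; simp
      have hv0 : v = 0 := by
        by_contra h0
        exact absurd hvv (ne_of_gt (hg_pos s v h0))
      have : b.equivFun v = c := by
        rw [hv, ← b.equivFun_symm_apply]; exact b.equivFun.apply_symm_apply c
      rw [← this, hv0]; simp
    intro x y hxy
    have : G s *ᵥ (x - y) = 0 := by
      rw [Matrix.mulVec_sub, hxy, sub_self]
    have := hker _ this
    exact sub_eq_zero.mp this
  have hGdet : ∀ s : ℝ, (G s).det ≠ 0 := fun s =>
    IsUnit.ne_zero ((Matrix.isUnit_iff_isUnit_det _).mp (hGunit s))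
  -- the coordinates of H
  have hGc : ∀ s : ℝ, G s *ᵥ (b.equivFun (H s)) = p := by
    intro s
    funext j
    have h1 : (G s *ᵥ (b.equivFun (H s))) j = g s (H s) (b j) := by
      rw [hg_symm]
      conv_rhs => rw [← b.sum_equivFun (H s)]
      simp only [map_sum, LinearMap.sum_apply, map_smul, LinearMap.smul_apply, smul_eq_mul,
        Matrix.mulVec, dotProduct, hG, Matrix.of_apply]
      exact Finset.sum_congr rfl fun i _ => by ring
    rw [h1, hH s (b j)]
  have hHrepr : ∀ s : ℝ, b.equivFun (H s) = (G s)⁻¹ *ᵥ p := by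
    intro s
    rw [← hGc s, Matrix.mulVec_mulVec,
      Matrix.nonsing_inv_mul _ ((Matrix.isUnit_iff_isUnit_det _).mp (hGunit s)),
      Matrix.one_mulVec]
  -- differentiability of the coordinates of H
  have hinvdiff : ∀ (t : ℝ) i j, DifferentiableAt ℝ (fun s => (G s)⁻¹ i j) t := by
    intro t i j
    have heq : (fun s => (G s)⁻¹ i j)
        = fun s => ((G s).det)⁻¹ * ((G s).updateRow j (Pi.single i 1)).det := by
      funext s
      rw [Matrix.inv_def, Ring.inverse_eq_inv, Matrix.smul_apply, smul_eq_mul,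
        Matrix.adjugate_apply]
    rw [heq]
    refine ((det_diffAt G t (hGdiff t)).inv (hGdet t)).mul (det_diffAt _ t ?_)
    intro a c
    rcases eq_or_ne a j with hj | hj
    · simp only [Matrix.updateRow_apply, hj, if_pos rfl]
      exact differentiableAt_const _
    · simp only [Matrix.updateRow_apply, if_neg hj]
      exact hGdiff t a c
  have hHdiff : ∀ t : ℝ, DifferentiableAt ℝ H t := by
    intro t
    have heq : H = fun s => ∑ i, ((G s)⁻¹ *ᵥ p) i • b i := by
      funext s
      rw [← hHrepr s, ← b.equivFun_symm_apply, b.equivFun.symm_apply_apply]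
    rw [heq]
    refine DifferentiableAt.fun_sum fun i _ => DifferentiableAt.smul ?_ (differentiableAt_const _)
    have : (fun s => ((G s)⁻¹ *ᵥ p) i) = fun s => ∑ j, (G s)⁻¹ i j * p j := by
      funext s; simp [Matrix.mulVec, dotProduct]
    rw [this]
    exact DifferentiableAt.fun_sum fun j _ => (hinvdiff t i j).mul (differentiableAt_const _)
  -- the derivative of the varying inner products, as a bilinear map
  have hβ : ∀ (t : ℝ) (X Y : V),
      HasDerivAt (fun s => g s X Y) (((2:ℝ) • ((g t).comp (L t))) X Y) t := by
    intro t X Y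
    have := hL_deriv t X Y
    simpa [LinearMap.smul_apply, smul_eq_mul] using this
  -- H is differentiable with H' = -2 L H
  have hHderiv : ∀ t : ℝ, HasDerivAt H (-((2:ℝ) • L t (H t))) t := by
    intro t
    have hD := (hHdiff t).hasDerivAt
    set D := deriv H t with hDdef
    have hzero : ∀ X : V, ((2:ℝ) • ((g t).comp (L t))) (H t) X + g t D X + g t (H t) 0 = 0 := by
      intro X
      have h1 : HasDerivAt (fun s => g s (H s) X)
          (((2:ℝ) • ((g t).comp (L t))) (H t) X + g t D X + g t (H t) 0) t :=
        hasDerivAt_bilin b g t _ (hβ t) hD (hasDerivAt_const t X)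
      have h2 : (fun s => g s (H s) X) = fun _ => φ X := by
        funext s; exact hH s X
      have h3 : HasDerivAt (fun s => g s (H s) X) 0 t := by
        rw [h2]; exact hasDerivAt_const t _
      exact h1.unique h3
    have hDval : D = -((2:ℝ) • L t (H t)) := by
      have hw : ∀ X : V, g t (D + (2:ℝ) • L t (H t)) X = 0 := by
        intro X
        have := hzero X
        simp only [LinearMap.smul_apply, smul_eq_mul, LinearMap.comp_apply, map_zero] at this
        simp only [map_add, LinearMap.add_apply, map_smul, LinearMap.smul_apply, smul_eq_mul]
        linarith
      exact eq_neg_of_add_eq_zero_left (hnd t _ hw)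
    rw [← hDval]; exact hD
  refine ⟨fun t => -(g t (L t (H t)) (H t)), ?_, ?_⟩
  · intro t
    have hbd : HasDerivAt (fun s => g s (H s) (H s))
        (((2:ℝ) • ((g t).comp (L t))) (H t) (H t) + g t (-((2:ℝ) • L t (H t))) (H t)
          + g t (H t) (-((2:ℝ) • L t (H t)))) t :=
      hasDerivAt_bilin b g t _ (hβ t) (hHderiv t) (hHderiv t)
    have hfun : h = fun s => (1/2 : ℝ) * g s (H s) (H s) := funext hh
    rw [hfun]
    refine (hbd.const_mul (1/2 : ℝ)).congr_deriv (Eq.symm ?_)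
    simp only [LinearMap.smul_apply, smul_eq_mul, LinearMap.comp_apply, map_neg, map_smul,
      LinearMap.neg_apply]
    rw [hg_symm t (H t) (L t (H t))]
    ring
  · intro t
    have hF : HasDerivAt (fun s => L s (H s))
        (L' t (H t) + L t (-((2:ℝ) • L t (H t)))) t :=
      hasDerivAt_endo_apply b L t (L' t) (hL' t) (hHderiv t)
    have hbd : HasDerivAt (fun s => g s (L s (H s)) (H s))
        (((2:ℝ) • ((g t).comp (L t))) (L t (H t)) (H t)
          + g t (L' t (H t) + L t (-((2:ℝ) • L t (H t)))) (H t)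
          + g t (L t (H t)) (-((2:ℝ) • L t (H t)))) t :=
      hasDerivAt_bilin b g t _ (hβ t) hF (hHderiv t)
    refine hbd.neg.congr_deriv (Eq.symm ?_)
    simp only [LinearMap.smul_apply, smul_eq_mul, LinearMap.comp_apply, map_neg, map_smul,
      map_add, LinearMap.add_apply, LinearMap.neg_apply]
    rw [hL_symm t (L t (H t)) (H t)]
    ring
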